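/- (Invariance of the average state) For every g : G, (A g) * ρμ * (A g)ᴴ = ρμ and (A g)ᴴ * ρμ * (A g) = ρμ. -/

import Mathlib

/-!
Under `A g = f g ⊗ₖ 1` the vectorization of a matrix `X` goes to that of `f g * X`, so, `f` being
projective, `A g` maps the rank-one state `ρ h` to `ρ (g * h)`: the phase `c g h` cancels in the
outer product. Conjugation by a fixed matrix commutes with the entrywise integral, so left
invariance of Haar measure gives `A g * ρμ * (A g)ᴴ = ρμ`; the second identity follows because
`A g` is unitary.
-/

open MeasureTheory
open scoped Kronecker Matrix ComplexOrder

noncomputable section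

namespace GroupEstimation

variable {G : Type} [Group G] [TopologicalSpace G] [IsTopologicalGroup G]
  [CompactSpace G] [T2Space G] [MeasurableSpace G] [BorelSpace G]

/-- Vectorization of a square matrix. -/
def vec {d : ℕ} (A : Matrix (Fin d) (Fin d) ℂ) : EuclideanSpace ℂ (Fin d × Fin d) :=
  WithLp.toLp 2 (fun p => A p.1 p.2)

/-- The rank-one state `|f(g)⟩⟩⟨⟨f(g)|`. -/
def rho {d : ℕ} (f : G → Matrix (Fin d) (Fin d) ℂ) (g : G) :
    Matrix (Fin d × Fin d) (Fin d × Fin d) ℂ :=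
  fun p q => f g p.1 p.2 * star (f g q.1 q.2)

/-- `A g = f g ⊗ₖ 1`. -/
def Amat {d : ℕ} (f : G → Matrix (Fin d) (Fin d) ℂ) (g : G) :
    Matrix (Fin d × Fin d) (Fin d × Fin d) ℂ :=
  f g ⊗ₖ (1 : Matrix (Fin d) (Fin d) ℂ)

/-- The average state `ρμ` (entrywise Bochner integral). -/
def rhoMu (μ : Measure G) {d : ℕ} (f : G → Matrix (Fin d) (Fin d) ℂ) :
    Matrix (Fin d × Fin d) (Fin d × Fin d) ℂ :=
  fun p q => ∫ g, rho f g p q ∂μ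

/-- positivity, vanishing at ∅ and countable additivity (the "measure part" of a GPOVM). -/
def IsPreGPOVM {d : ℕ} (M : Set G → Matrix (Fin d × Fin d) (Fin d × Fin d) ℂ) : Prop :=
  (∀ B : Set G, MeasurableSet B → (M B).PosSemidef) ∧ M ∅ = 0 ∧
    ∀ B : ℕ → Set G, (∀ j, MeasurableSet (B j)) → Pairwise (Function.onFun Disjoint B) →
      M (⋃ j, B j) = ∑' j, M (B j)

/-- Generalized POVM. -/
def IsGPOVM (μ : Measure G) {d : ℕ} (f : G → Matrix (Fin d) (Fin d) ℂ)
    (M : Set G → Matrix (Fin d × Fin d) (Fin d × Fin d) ℂ) : Prop :=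
  IsPreGPOVM M ∧ (M Set.univ * rhoMu μ f).trace = 1

/-- Covariance of a GPOVM. -/
def IsCovariant {d : ℕ} (f : G → Matrix (Fin d) (Fin d) ℂ)
    (M : Set G → Matrix (Fin d × Fin d) (Fin d × Fin d) ℂ) : Prop :=
  ∀ (g : G) (B : Set G), MeasurableSet B →
    M ((g * ·) '' B) = Amat f g * M B * (Amat f g)ᴴ

/-- The covariant GPOVM with seed `T`. -/
def MT (μ : Measure G) {d : ℕ} (f : G → Matrix (Fin d) (Fin d) ℂ)
    (T : Matrix (Fin d × Fin d) (Fin d × Fin d) ℂ) (B : Set G) :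
    Matrix (Fin d × Fin d) (Fin d × Fin d) ℂ :=
  fun p q => ∫ g in B, (Amat f g * T * (Amat f g)ᴴ) p q ∂μ

/-- Pointwise risk. -/
def Dpt {d : ℕ} (w : G → G → ℝ)
    (ν : (Set G → Matrix (Fin d × Fin d) (Fin d × Fin d) ℂ) → G → Measure G)
    (M : Set G → Matrix (Fin d × Fin d) (Fin d × Fin d) ℂ) (g : G) : ℝ :=
  ∫ gh, w g gh ∂(ν M g)

/-- Bayes risk. -/
def Dbayes (μ : Measure G) {d : ℕ} (w : G → G → ℝ)
    (ν : (Set G → Matrix (Fin d × Fin d) (Fin d × Fin d) ℂ) → G → Measure G)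
    (M : Set G → Matrix (Fin d × Fin d) (Fin d × Fin d) ℂ) : ℝ :=
  ∫ g, Dpt w ν M g ∂μ

/-- Minimax risk. -/
def Dmax {d : ℕ} (w : G → G → ℝ)
    (ν : (Set G → Matrix (Fin d × Fin d) (Fin d × Fin d) ℂ) → G → Measure G)
    (M : Set G → Matrix (Fin d × Fin d) (Fin d × Fin d) ℂ) : ℝ :=
  ⨆ g : G, Dpt w ν M g

/-- Twisted GPOVM `M_g`. -/
def twist {d : ℕ} (f : G → Matrix (Fin d) (Fin d) ℂ)
    (M : Set G → Matrix (Fin d × Fin d) (Fin d × Fin d) ℂ) (g : G) (B : Set G) :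
    Matrix (Fin d × Fin d) (Fin d × Fin d) ℂ :=
  (Amat f g)ᴴ * M ((g * ·) '' B) * Amat f g

/-- Matrix of the orthogonal projection onto span {v g}. -/
def P0 {d : ℕ} (f : G → Matrix (Fin d) (Fin d) ℂ) :
    Matrix (Fin d × Fin d) (Fin d × Fin d) ℂ :=
  Matrix.toEuclideanLin.symm
    ((Submodule.span ℂ (Set.range fun g => vec (f g))).subtype ∘ₗ
      (Submodule.orthogonalProjectionOnto (Submodule.span ℂ (Set.range fun g => vec (f g)))).toLinearMap)

open Matrix

section RankOne

variable {𝕜 : Type*} [RCLike 𝕜] {m n : Type*}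

theorem mul_vecMulVec_star_mul_conjTranspose [Fintype n] (M : Matrix m n 𝕜) (u : n → 𝕜) :
    M * vecMulVec u (star u) * Mᴴ = vecMulVec (M *ᵥ u) (star (M *ᵥ u)) := by
  rw [mul_vecMulVec, vecMulVec_mul, vecMul_conjTranspose, star_star]

theorem vecMulVec_smul_star_of_norm_eq_one {c : 𝕜} (hc : ‖c‖ = 1) (u : n → 𝕜) :
    vecMulVec (c • u) (star (c • u)) = vecMulVec u (star u) := by
  rw [star_smul, smul_vecMulVec, vecMulVec_smul, smul_smul, RCLike.star_def, RCLike.mul_conj,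
    hc]
  simp

end RankOne

section EntrywiseIntegral

variable {α : Type*} [MeasurableSpace α] {μ : Measure α} {𝕜 : Type*} [RCLike 𝕜]
  {l m n o : Type*} [Fintype m] [Fintype n]

theorem mul_integral_entrywise_mul (A : Matrix l m 𝕜) (F : α → Matrix m n 𝕜) (B : Matrix n o 𝕜)
    (hF : ∀ i j, Integrable (fun x => F x i j) μ) :
    A * of (fun i j => ∫ x, F x i j ∂μ) * B = of fun i j => ∫ x, (A * F x * B) i j ∂μ := by
  ext i j
  simp only [mul_apply, of_apply]
  rw [integral_finsetSum _ fun s _ => ?integrable]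
  case integrable => exact (integrable_finsetSum _ fun r _ => (hF r s).const_mul _).mul_const _
  refine Finset.sum_congr rfl fun s _ => ?_
  rw [integral_mul_const, integral_finsetSum _ fun r _ => (hF r s).const_mul _]
  simp only [integral_const_mul]

end EntrywiseIntegral

theorem star_mul_mul_eq_of_mul_mul_star_eq {R : Type*} [Monoid R] [StarMul R] {U a : R}
    (hU : U ∈ unitary R) (h : U * a * star U = a) : star U * a * U = a := by
  conv_lhs => rw [← h]
  simp only [mul_assoc, Unitary.star_mul_self_of_mem hU, mul_one]
  rw [← mul_assoc, Unitary.star_mul_self_of_mem hU, one_mul]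

section ProjectiveRepresentation

variable {X : Type} {d : ℕ} {f : X → Matrix (Fin d) (Fin d) ℂ}

/- Mathlib's `Matrix.vec` stacks columns, whereas `rho` is built from the row-stacking `vec`;
hence the transposes. -/
theorem rho_eq_vecMulVec (g : X) :
    rho f g = vecMulVec (Matrix.vec (f g)ᵀ) (star (Matrix.vec (f g)ᵀ)) :=
  rfl

theorem Amat_mul_rho_mul_conjTranspose [Mul X] {g h : X} {c : ℂ} (hc : ‖c‖ = 1)
    (hgh : f (g * h) = c • (f g * f h)) :
    Amat f g * rho f h * (Amat f g)ᴴ = rho f (g * h) := by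
  rw [rho_eq_vecMulVec, mul_vecMulVec_star_mul_conjTranspose, Amat, kronecker_mulVec_vec, Matrix.one_mul,
    ← transpose_mul, rho_eq_vecMulVec, hgh, transpose_smul, vec_smul,
    vecMulVec_smul_star_of_norm_eq_one hc]

theorem Amat_mem_unitary {g : X} (hg : f g ∈ unitaryGroup (Fin d) ℂ) :
    Amat f g ∈ unitary (Matrix (Fin d × Fin d) (Fin d × Fin d) ℂ) :=
  kronecker_mem_unitary hg (one_mem _)

theorem continuous_rho_apply [TopologicalSpace X] (hf : Continuous f) (p q : Fin d × Fin d) :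
    Continuous fun g => rho f g p q := by
  unfold rho
  fun_prop

end ProjectiveRepresentation

theorem rhoMu_invariant_general
    {G : Type} [Group G] [TopologicalSpace G] [IsTopologicalGroup G]
    [CompactSpace G] [MeasurableSpace G] [BorelSpace G]
    (μ : Measure G) [μ.IsHaarMeasure]
    {d : ℕ} (f : G → Matrix (Fin d) (Fin d) ℂ)
    (hf_cont : Continuous f)
    (hf_unitary : ∀ g : G, f g ∈ Matrix.unitaryGroup (Fin d) ℂ)
    (c : G → G → ℂ) (hc_norm : ∀ g h : G, ‖c g h‖ = 1)
    (hc_proj : ∀ g h : G, f (g * h) = c g h • (f g * f h))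
    (g : G) :
    Amat f g * rhoMu μ f * (Amat f g)ᴴ = rhoMu μ f ∧
    (Amat f g)ᴴ * rhoMu μ f * Amat f g = rhoMu μ f := by
  have h_int : ∀ p q, Integrable (fun h => rho f h p q) μ := fun p q =>
    (continuous_rho_apply hf_cont p q).integrable_of_hasCompactSupport (.of_compactSpace _)
  have h_conj : Amat f g * rhoMu μ f * (Amat f g)ᴴ = rhoMu μ f := by
    change _ * of (fun p q => ∫ h, rho f h p q ∂μ) * _ = _
    rw [mul_integral_entrywise_mul _ _ _ h_int]
    ext p q
    simp only [of_apply, Amat_mul_rho_mul_conjTranspose (hc_norm g _) (hc_proj g _)]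
    exact integral_mul_left_eq_self (fun h => rho f h p q) g
  exact ⟨h_conj, star_mul_mul_eq_of_mul_mul_star_eq (Amat_mem_unitary (hf_unitary g)) h_conj⟩

/-- Invariance of the average state under the action `A g`. -/
theorem rhoMu_invariant
    {G : Type} [Group G] [TopologicalSpace G] [IsTopologicalGroup G]
    [CompactSpace G] [T2Space G] [MeasurableSpace G] [BorelSpace G]
    (μ : Measure G) [μ.IsHaarMeasure] [IsProbabilityMeasure μ]
    {d : ℕ} (hd : 0 < d) (f : G → Matrix (Fin d) (Fin d) ℂ)
    (hf_cont : Continuous f) (hf_one : f 1 = 1)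
    (hf_unitary : ∀ g : G, f g ∈ Matrix.unitaryGroup (Fin d) ℂ)
    (c : G → G → ℂ) (hc_norm : ∀ g h : G, ‖c g h‖ = 1)
    (hc_proj : ∀ g h : G, f (g * h) = c g h • (f g * f h))
    (g : G) :
    Amat f g * rhoMu μ f * (Amat f g)ᴴ = rhoMu μ f ∧
    (Amat f g)ᴴ * rhoMu μ f * Amat f g = rhoMu μ f :=
  rhoMu_invariant_general μ f hf_cont hf_unitary c hc_norm hc_proj g

end GroupEstimation
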